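/- arXiv:2112.02645 — 2 statements merged into one kernel-verified Lean document; each statement's English description precedes it below -/
import Mathlib

section
/- Let D be a weighted oriented graph with underlying graph G and edge ideal I(D) in S = K[t_1,…,t_s]. A prime ideal p of S is an associated prime of I(D) if and only if p = (C), the prime ideal generated by the variables in C, for some strong vertex cover C of D. -/
open MvPolynomial Pointwise

/-- A weighted oriented graph `D` on vertices `t_1, …, t_s` (indexed by `Fin s`):
a set of directed edges with no loops such that for each unordered pair of vertices at
most one orientation occurs, together with a weight function `w : V(D) → ℕ₊` which
equals `1` on every source vertex (a vertex having only outgoing edges, i.e. no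
incoming edge). -/
structure WOGraph (s : ℕ) where
  E : Set (Fin s × Fin s)
  no_loops : ∀ i : Fin s, (i, i) ∉ E
  no_two_orientations : ∀ i j : Fin s, (i, j) ∈ E → (j, i) ∉ E
  w : Fin s → ℕ
  w_pos : ∀ i, 1 ≤ w i
  source_weight_one : ∀ i : Fin s, (∀ j, (j, i) ∉ E) → w i = 1

/-- A vertex of `D` is a sink if it has only incoming edges. -/
def WOGraph.IsSink {s : ℕ} (D : WOGraph s) (i : Fin s) : Prop := ∀ j, (i, j) ∉ D.E

/-- `V⁺(D)`: the set of vertices of weight greater than `1`. -/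
def WOGraph.Vplus {s : ℕ} (D : WOGraph s) : Set (Fin s) := { i | 1 < D.w i }

/-- The underlying simple graph `G` of `D`, with edges `{t_i, t_j}` for `(t_i,t_j) ∈ E(D)`. -/
def WOGraph.underlying {s : ℕ} (D : WOGraph s) : SimpleGraph (Fin s) :=
  SimpleGraph.fromRel (fun i j => (i, j) ∈ D.E)

/-- The edge ideal `I(D) = (t_i t_j^{w_j} : (t_i, t_j) ∈ E(D))` of `D`
in `S = K[t_1, …, t_s]`. -/
noncomputable def WOGraph.edgeIdeal {s : ℕ} (D : WOGraph s) (K : Type*) [Field K] :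
    Ideal (MvPolynomial (Fin s) K) :=
  Ideal.span { f | ∃ e ∈ D.E, f = X e.1 * X e.2 ^ D.w e.2 }

/-- The set `Ass(I)` of associated primes of `I`: the prime ideals of the form
`(I : f)` for some `f ∈ S`. -/
def assPrimes {R : Type*} [CommRing R] (I : Ideal R) : Set (Ideal R) :=
  { p | p.IsPrime ∧ ∃ f : R, p = Submodule.colon I (Ideal.span {f}) }

/-- The neighbor set `N_G(x)` of a vertex in the underlying graph of `D`. -/
def WOGraph.neighbors {s : ℕ} (D : WOGraph s) (x : Fin s) : Set (Fin s) :=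
  { y | (x, y) ∈ D.E ∨ (y, x) ∈ D.E }

/-- A vertex cover of the underlying graph of `D`. -/
def WOGraph.IsVertexCover {s : ℕ} (D : WOGraph s) (C : Set (Fin s)) : Prop :=
  ∀ e ∈ D.E, (e : Fin s × Fin s).1 ∈ C ∨ e.2 ∈ C

/-- `L_1(C) = {x ∈ C : ∃ (x,y) ∈ E(D) with y ∉ C}`. -/
def WOGraph.L1 {s : ℕ} (D : WOGraph s) (C : Set (Fin s)) : Set (Fin s) :=
  { x | x ∈ C ∧ ∃ y, (x, y) ∈ D.E ∧ y ∉ C }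

/-- `L_3(C) = {x ∈ C : N_G(x) ⊆ C}`. -/
def WOGraph.L3 {s : ℕ} (D : WOGraph s) (C : Set (Fin s)) : Set (Fin s) :=
  { x | x ∈ C ∧ D.neighbors x ⊆ C }

/-- `L_2(C) = C \ (L_1(C) ∪ L_3(C))`. -/
def WOGraph.L2 {s : ℕ} (D : WOGraph s) (C : Set (Fin s)) : Set (Fin s) :=
  C \ (D.L1 C ∪ D.L3 C)

/-- A minimal vertex cover: a vertex cover minimal with respect to inclusion. -/
def WOGraph.IsMinimalVertexCover {s : ℕ} (D : WOGraph s) (C : Set (Fin s)) : Prop :=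
  D.IsVertexCover C ∧ ∀ C' ⊆ C, D.IsVertexCover C' → C' = C

/-- A strong vertex cover of `D`: a vertex cover `C` which is a minimal vertex cover,
or else such that for every `x ∈ L_3(C)` there is `(y, x) ∈ E(D)` with
`y ∈ L_2(C) ∪ L_3(C)` and `w(y) ≥ 2`. -/
def WOGraph.IsStrongVertexCover {s : ℕ} (D : WOGraph s) (C : Set (Fin s)) : Prop :=
  D.IsVertexCover C ∧
    (D.IsMinimalVertexCover C ∨
      ∀ x ∈ D.L3 C, ∃ y, (y, x) ∈ D.E ∧ y ∈ D.L2 C ∪ D.L3 C ∧ 2 ≤ D.w y)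

/-- The irreducible ideal `I_C = (L_1(C) ∪ {t_i^{w_i} : t_i ∈ L_2(C) ∪ L_3(C)})`
attached to a strong vertex cover `C`. -/
noncomputable def coverIdeal (K : Type*) [Field K] {s : ℕ} (D : WOGraph s) (C : Set (Fin s)) :
    Ideal (MvPolynomial (Fin s) K) :=
  Ideal.span ((fun x => (X x : MvPolynomial (Fin s) K)) '' D.L1 C ∪
    (fun x => (X x : MvPolynomial (Fin s) K) ^ D.w x) '' (D.L2 C ∪ D.L3 C))

/-!
`I(D)` is the monomial ideal of polynomials supported on the upper set of exponents dominating
some `t_x t_y^{w_y}`. If `p = (I : f)` is prime and `t^u ∉ p`, then `(I : t^u f) = p`, and the terms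
of `t^u f` lying in `I` can be dropped without changing the colon. Taking `f` with fewest terms thus
forces `t^{u+z} ∉ I` whenever `t^u ∉ p` and `z ∈ supp f`, which makes `p = (I : t^z)`. Such a prime
is `(C)` for `C = {i | t_i ∈ p}`, and `(I : t^b) = (C)` says exactly that `t^{v+b} ∈ I` iff `t^v`
involves a variable of `C`. For `x ∈ L_3(C)` the monomial `t_x t^b ∈ I` can then only come from an
edge `(y, x)` with `t_y ∣ t^b`, and `b_y < w_y` forces `w_y ≥ 2`: `C` is a strong vertex cover.
Conversely, for a strong vertex cover the exponent condition holds with `b_i = 0` on `L_1(C)`,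
`b_i = w_i - 1` on `L_2(C) ∪ L_3(C)` and `b_i = w_i` off `C`.
-/

theorem Ideal.colon_span_singleton_eq_of_sub_mem {A : Type*} [CommRing A] {I : Ideal A}
    {x y : A} (h : x - y ∈ I) : I.colon (Ideal.span {x}) = I.colon (Ideal.span {y}) := by
  ext r
  simp only [Ideal.mem_colon_span_singleton]
  have hr : r * x - r * y ∈ I := by rw [← mul_sub]; exact I.mul_mem_left r h
  exact ⟨fun hx => by simpa using I.sub_mem hx hr, fun hy => by simpa using I.add_mem hy hr⟩

theorem Ideal.colon_span_singleton_mul_of_notMem {A : Type*} [CommSemiring A] {I : Ideal A}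
    {x a : A} (hp : (I.colon (Ideal.span {x})).IsPrime) (ha : a ∉ I.colon (Ideal.span {x})) :
    I.colon (Ideal.span {a * x}) = I.colon (Ideal.span {x}) := by
  ext r
  rw [Ideal.mem_colon_span_singleton, ← mul_assoc, ← Ideal.mem_colon_span_singleton]
  exact ⟨fun h => (hp.mem_or_mem h).resolve_right ha, fun h => Ideal.mul_mem_right a _ h⟩

namespace MvPolynomial

variable {σ R : Type*}

section CommSemiring

variable [CommSemiring R]

theorem mem_of_forall_monomial_mem {J : Ideal (MvPolynomial σ R)} {x : MvPolynomial σ R}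
    (h : ∀ v ∈ x.support, monomial v 1 ∈ J) : x ∈ J := by
  rw [x.as_sum]
  refine J.sum_mem fun v hv => ?_
  simpa [C_mul_monomial] using J.mul_mem_left (C (coeff v x)) (h v hv)

theorem support_monomial_one_mul (u : σ →₀ ℕ) (x : MvPolynomial σ R) :
    (monomial u 1 * x).support = x.support.map (addLeftEmbedding u) :=
  AddMonoidAlgebra.support_coeff_single_mul x _ (by simp) _

theorem monomial_one_mem_iff_of_isPrime {p : Ideal (MvPolynomial σ R)} (hp : p.IsPrime)
    {v : σ →₀ ℕ} : monomial v 1 ∈ p ↔ ∃ i, X i ∈ p ∧ v i ≠ 0 := by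
  rw [← prod_X_pow_eq_monomial, Ideal.IsPrime.prod_mem_iff]
  refine exists_congr fun i => ?_
  rw [Finsupp.mem_support_iff, and_comm]
  exact and_congr_left fun hi => hp.pow_mem_iff_mem _ (Nat.pos_of_ne_zero hi)

variable {U : Set (σ →₀ ℕ)} (hU : IsUpperSet U)

theorem mem_restrictSupportIdeal_iff {x : MvPolynomial σ R} :
    x ∈ restrictSupportIdeal R U hU ↔ ∀ v ∈ x.support, v ∈ U :=
  Iff.rfl

theorem mem_restrictSupportIdeal_colon_monomial_iff {b : σ →₀ ℕ} {x : MvPolynomial σ R} :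
    x ∈ (restrictSupportIdeal R U hU).colon (Ideal.span {monomial b (1 : R)}) ↔
      ∀ v ∈ x.support, v + b ∈ U := by
  rw [Ideal.mem_colon_span_singleton, mul_comm, mem_restrictSupportIdeal_iff,
    support_monomial_one_mul]
  simp [add_comm]

theorem monomial_mem_restrictSupportIdeal_colon_monomial_iff [Nontrivial R] {b v : σ →₀ ℕ} :
    monomial v (1 : R) ∈ (restrictSupportIdeal R U hU).colon (Ideal.span {monomial b (1 : R)}) ↔
      v + b ∈ U := by
  rw [Ideal.mem_colon_span_singleton, monomial_mul, one_mul]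
  exact (monomial_mem_restrictSupport R).trans (or_iff_left one_ne_zero)

theorem restrictSupportIdeal_colon_monomial_eq_span_X {b : σ →₀ ℕ} {C : Set σ}
    (hb : ∀ v, v + b ∈ U ↔ ∃ i ∈ C, v i ≠ 0) :
    (restrictSupportIdeal R U hU).colon (Ideal.span {monomial b (1 : R)}) =
      Ideal.span (X '' C) := by
  ext x
  rw [mem_restrictSupportIdeal_colon_monomial_iff, mem_ideal_span_X_image]
  exact forall₂_congr fun v _ => hb v

end CommSemiring

section CommRing

variable [CommRing R]

theorem exists_sub_mem_restrictSupport (U : Set (σ →₀ ℕ)) (x : MvPolynomial σ R) :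
    ∃ y : MvPolynomial σ R, x - y ∈ restrictSupport R U ∧ y.support ⊆ x.support ∧
      ∀ v ∈ y.support, v ∉ U := by
  classical
  set y := ∑ v ∈ x.support.filter (· ∉ U), monomial v (coeff v x)
  have hy : ∀ v ∈ y.support, v ∈ x.support.filter (· ∉ U) := by
    intro v hv
    by_contra h
    simp [y, coeff_sum, coeff_monomial, h] at hv
  refine ⟨y, ?_, fun v hv => (Finset.mem_filter.mp (hy v hv)).1,
    fun v hv => (Finset.mem_filter.mp (hy v hv)).2⟩
  have hxy : x - y = ∑ v ∈ x.support.filter (· ∈ U), monomial v (coeff v x) := by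
    rw [sub_eq_iff_eq_add, Finset.sum_filter_add_sum_filter_not, ← as_sum]
  rw [hxy]
  exact Submodule.sum_mem _ fun v hv => by simp [(Finset.mem_filter.mp hv).2]

variable {U : Set (σ →₀ ℕ)} (hU : IsUpperSet U)

theorem exists_colon_eq_card_support_lt {p : Ideal (MvPolynomial σ R)} (hp : p.IsPrime)
    {g : MvPolynomial σ R} (hpg : p = (restrictSupportIdeal R U hU).colon (Ideal.span {g}))
    {u z : σ →₀ ℕ} (hu : monomial u 1 ∉ p) (hz : z ∈ g.support) (huz : u + z ∈ U) :
    ∃ g' : MvPolynomial σ R, p = (restrictSupportIdeal R U hU).colon (Ideal.span {g'}) ∧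
      g'.support.card < g.support.card := by
  classical
  subst hpg
  obtain ⟨g', hdiff, hsub, hg'U⟩ := exists_sub_mem_restrictSupport U (monomial u 1 * g)
  refine ⟨g', ?_, ?_⟩
  · rw [← Ideal.colon_span_singleton_eq_of_sub_mem (I := restrictSupportIdeal R U hU) hdiff,
      Ideal.colon_span_singleton_mul_of_notMem hp hu]
  · have huz_mem : u + z ∈ (monomial u 1 * g).support := by
      rw [support_monomial_one_mul]
      exact Finset.mem_map_of_mem _ hz
    calc g'.support.card ≤ ((monomial u 1 * g).support.erase (u + z)).card :=
          Finset.card_le_card fun v hv =>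
            Finset.mem_erase.mpr ⟨fun h => hg'U v hv (h ▸ huz), hsub hv⟩
      _ < (monomial u 1 * g).support.card := Finset.card_erase_lt_of_mem huz_mem
      _ = g.support.card := by rw [support_monomial_one_mul, Finset.card_map]

theorem eq_colon_monomial_of_forall_add_notMem [IsDomain R] {p : Ideal (MvPolynomial σ R)}
    {g : MvPolynomial σ R}
    (hpg : p = (restrictSupportIdeal R U hU).colon (Ideal.span {g}))
    (hmin : ∀ u, monomial u (1 : R) ∉ p → ∀ z ∈ g.support, u + z ∉ U)
    {b : σ →₀ ℕ} (hb : b ∈ g.support) :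
    p = (restrictSupportIdeal R U hU).colon (Ideal.span {monomial b (1 : R)}) := by
  classical
  have hg : g ≠ 0 := by rintro rfl; simp at hb
  have hmem : ∀ x, x ∈ p ↔ x * g ∈ restrictSupportIdeal R U hU := fun x => by
    rw [hpg, Ideal.mem_colon_span_singleton]
  have hmono : ∀ x ∈ p, ∀ v ∈ x.support, monomial v (1 : R) ∈ p := by
    -- the terms of `x` whose monomial is not in `p` add up to some `y ∈ p`; any term of `y * g`
    -- lies in `I` and has the form `t^{y' + z}` with `t^{y'} ∉ p`, `z ∈ supp g`, against `hmin`
    intro x hx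
    obtain ⟨y, hxy, -, hyp⟩ := exists_sub_mem_restrictSupport {v | monomial v (1 : R) ∈ p} x
    have hy0 : y = 0 := by
      by_contra hy0
      have hyg : y * g ∈ restrictSupportIdeal R U hU :=
        (hmem y).mp (by simpa using p.sub_mem hx (mem_of_forall_monomial_mem hxy))
      obtain ⟨w, hw⟩ := support_nonempty.mpr (mul_ne_zero hy0 hg)
      obtain ⟨y', hy', z, hz, rfl⟩ := Finset.mem_add.mp (support_mul y g hw)
      exact hmin y' (hyp y' hy') z hz ((mem_restrictSupportIdeal_iff hU).mp hyg _ hw)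
    rw [hy0, sub_zero] at hxy
    exact hxy
  ext x
  rw [mem_restrictSupportIdeal_colon_monomial_iff]
  constructor
  · intro hx v hv
    have hvg := (mem_restrictSupportIdeal_iff hU).mp ((hmem _).mp (hmono x hx v hv))
    exact hvg (v + b) (by rw [support_monomial_one_mul]; exact Finset.mem_map_of_mem _ hb)
  · intro hx
    exact mem_of_forall_monomial_mem fun v hv => by_contra fun h => hmin v h b hb (hx v hv)

theorem exists_eq_colon_monomial [IsDomain R] {p : Ideal (MvPolynomial σ R)} (hp : p.IsPrime)
    {f : MvPolynomial σ R} (hpf : p = (restrictSupportIdeal R U hU).colon (Ideal.span {f})) :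
    ∃ b : σ →₀ ℕ, p = (restrictSupportIdeal R U hU).colon (Ideal.span {monomial b (1 : R)}) := by
  obtain ⟨g, hpg, hmin⟩ := (measure fun g : MvPolynomial σ R => g.support.card).wf.has_min
    {g | p = (restrictSupportIdeal R U hU).colon (Ideal.span {g})} ⟨f, hpf⟩
  have hg : g ≠ 0 := by
    rintro rfl
    exact hp.ne_top (by simpa [Submodule.colon_singleton_zero] using hpg)
  obtain ⟨b, hb⟩ := support_nonempty.mpr hg
  refine ⟨b, eq_colon_monomial_of_forall_add_notMem hU hpg (fun u hu z hz huz => ?_) hb⟩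
  obtain ⟨g', hpg', hlt⟩ := exists_colon_eq_card_support_lt hU hp hpg hu hz huz
  exact hmin g' hpg' hlt

end CommRing

end MvPolynomial

theorem Finsupp.single_add_single_le_iff {α : Type*} {a b : α} (hab : a ≠ b) {m n : ℕ}
    {f : α →₀ ℕ} : Finsupp.single a m + Finsupp.single b n ≤ f ↔ m ≤ f a ∧ n ≤ f b := by
  classical
  rw [Finsupp.le_def]
  refine ⟨fun h => ⟨by simpa [hab] using h a, by simpa [hab.symm] using h b⟩, ?_⟩
  rintro ⟨ha, hb⟩ i
  rcases eq_or_ne i a with rfl | hia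
  · simpa [hab] using ha
  rcases eq_or_ne i b with rfl | hib
  · simpa [hia] using hb
  · simp [hia, hib]

namespace WOGraph

variable {s : ℕ} (D : WOGraph s)

theorem ne_of_mem_E {x y : Fin s} (hxy : (x, y) ∈ D.E) : x ≠ y :=
  fun h => D.no_loops x (h ▸ hxy)

def edgeExponents : Set (Fin s →₀ ℕ) :=
  {v | ∃ x y, (x, y) ∈ D.E ∧ 1 ≤ v x ∧ D.w y ≤ v y}

theorem isUpperSet_edgeExponents : IsUpperSet D.edgeExponents := by
  rintro v v' hvv' ⟨x, y, hxy, hx, hy⟩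
  exact ⟨x, y, hxy, hx.trans (hvv' x), hy.trans (hvv' y)⟩

theorem edgeIdeal_eq_restrictSupportIdeal (K : Type*) [Field K] :
    D.edgeIdeal K = restrictSupportIdeal K D.edgeExponents D.isUpperSet_edgeExponents := by
  have hgen : {f | ∃ e ∈ D.E, f = X e.1 * X e.2 ^ D.w e.2} =
      (fun v => monomial v (1 : K)) ''
        {v | ∃ e ∈ D.E, v = Finsupp.single e.1 1 + Finsupp.single e.2 (D.w e.2)} := by
    have hmon : ∀ e : Fin s × Fin s, (X e.1 * X e.2 ^ D.w e.2 : MvPolynomial (Fin s) K) =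
        monomial (Finsupp.single e.1 1 + Finsupp.single e.2 (D.w e.2)) 1 := fun e => by
      rw [X_pow_eq_monomial, X, monomial_mul, one_mul]
    simp only [hmon]
    ext f
    constructor
    · rintro ⟨e, he, rfl⟩
      exact ⟨_, ⟨e, he, rfl⟩, rfl⟩
    · rintro ⟨_, ⟨e, he, rfl⟩, rfl⟩
      exact ⟨e, he, rfl⟩
  ext f
  rw [edgeIdeal, hgen, mem_ideal_span_monomial_image, mem_restrictSupportIdeal_iff]
  refine forall₂_congr fun v _ => ⟨?_, ?_⟩
  · rintro ⟨_, ⟨⟨x, y⟩, hxy, rfl⟩, hle⟩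
    exact ⟨x, y, hxy, (Finsupp.single_add_single_le_iff (D.ne_of_mem_E hxy)).mp hle⟩
  · rintro ⟨x, y, hxy, hle⟩
    exact ⟨_, ⟨(x, y), hxy, rfl⟩,
      (Finsupp.single_add_single_le_iff (D.ne_of_mem_E hxy)).mpr hle⟩

variable {D} {C : Set (Fin s)}

theorem mem_L2_union_L3_iff {y : Fin s} : y ∈ D.L2 C ∪ D.L3 C ↔ y ∈ C ∧ y ∉ D.L1 C := by
  constructor
  · rintro (⟨hyC, hy⟩ | ⟨hyC, hN⟩)
    · exact ⟨hyC, fun h => hy (Or.inl h)⟩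
    · exact ⟨hyC, fun ⟨_, z, hyz, hzC⟩ => hzC (hN (Or.inl hyz))⟩
  · rintro ⟨hyC, hy⟩
    by_cases hy3 : y ∈ D.L3 C
    · exact Or.inr hy3
    · exact Or.inl ⟨hyC, fun h => h.elim hy hy3⟩

theorem IsMinimalVertexCover.L3_eq_empty (h : D.IsMinimalVertexCover C) : D.L3 C = ∅ := by
  refine Set.eq_empty_of_forall_notMem fun x ⟨hxC, hN⟩ => ?_
  have hcov : D.IsVertexCover (C \ {x}) := by
    rintro ⟨a, b⟩ hab
    have hne := D.ne_of_mem_E hab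
    by_cases hax : a = x
    · subst hax
      exact Or.inr ⟨hN (Or.inl hab), hne.symm⟩
    by_cases hbx : b = x
    · subst hbx
      exact Or.inl ⟨hN (Or.inr hab), hne⟩
    rcases h.1 _ hab with ha | hb
    · exact Or.inl ⟨ha, hax⟩
    · exact Or.inr ⟨hb, hbx⟩
  have hxC' : x ∈ C \ {x} := (h.2 _ Set.sdiff_subset hcov).symm ▸ hxC
  exact hxC'.2 rfl

theorem IsStrongVertexCover.exists_mem_L2_union_L3 (h : D.IsStrongVertexCover C) {x : Fin s}
    (hx : x ∈ D.L3 C) : ∃ y, (y, x) ∈ D.E ∧ y ∈ D.L2 C ∪ D.L3 C ∧ 2 ≤ D.w y := by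
  rcases h.2 with hmin | hstrong
  · rw [hmin.L3_eq_empty] at hx
    exact absurd hx (Set.notMem_empty x)
  · exact hstrong x hx

variable (D C) in
/-- `(I(D) : t^b) = (C)`, read on exponents; cf. `restrictSupportIdeal_colon_monomial_eq_span_X`. -/
def IsColonExponent (b : Fin s →₀ ℕ) : Prop :=
  ∀ v, v + b ∈ D.edgeExponents ↔ ∃ i ∈ C, v i ≠ 0

namespace IsColonExponent

variable {b : Fin s →₀ ℕ}

theorem notMem_edgeExponents (h : D.IsColonExponent C b) : b ∉ D.edgeExponents := fun hb => by
  simpa using (h 0).mp (by simpa using hb)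

theorem single_add_mem (h : D.IsColonExponent C b) {i : Fin s} (hi : i ∈ C) :
    Finsupp.single i 1 + b ∈ D.edgeExponents :=
  (h _).mpr ⟨i, hi, by simp⟩

theorem isVertexCover (h : D.IsColonExponent C b) : D.IsVertexCover C := by
  rintro ⟨x, y⟩ hxy
  have hne := D.ne_of_mem_E hxy
  obtain ⟨i, hi, hvi⟩ := (h (Finsupp.single x 1 + Finsupp.single y (D.w y))).mp
    ⟨x, y, hxy, by simp [hne.symm], by simp [hne]⟩
  rcases eq_or_ne i x with rfl | hix
  · exact Or.inl hi
  rcases eq_or_ne i y with rfl | hiy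
  · exact Or.inr hi
  · simp [hix.symm, hiy.symm] at hvi

theorem apply_lt_w (h : D.IsColonExponent C b) {z : Fin s} (hz : z ∈ C) : b z < D.w z := by
  by_contra! hle
  obtain ⟨x, y, hxy, hx, hy⟩ := h.single_add_mem hz
  refine h.notMem_edgeExponents ⟨x, y, hxy, ?_, ?_⟩
  · rcases eq_or_ne x z with rfl | hxz
    · exact (D.w_pos x).trans hle
    · simpa [hxz.symm] using hx
  · rcases eq_or_ne y z with rfl | hyz
    · exact hle
    · simpa [hyz.symm] using hy

theorem exists_mem_L2_union_L3 (h : D.IsColonExponent C b) {x : Fin s} (hx : x ∈ D.L3 C) :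
    ∃ y, (y, x) ∈ D.E ∧ y ∈ D.L2 C ∪ D.L3 C ∧ 2 ≤ D.w y := by
  obtain ⟨hxC, hN⟩ := hx
  obtain ⟨y, z, hyz, hy, hz⟩ := h.single_add_mem hxC
  have hyz' := D.ne_of_mem_E hyz
  rcases eq_or_ne z x with rfl | hzx
  · have hyC : y ∈ C := hN (Or.inr hyz)
    have hby : 1 ≤ b y := by simpa [hyz'] using hy
    refine ⟨y, hyz, mem_L2_union_L3_iff.mpr ⟨hyC, ?_⟩, by have := h.apply_lt_w hyC; omega⟩
    rintro ⟨-, t, hyt, htC⟩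
    obtain ⟨i, hi, hti⟩ := (h (Finsupp.single t (D.w t))).mp
      ⟨y, t, hyt, by simpa [D.ne_of_mem_E hyt] using hby, by simp⟩
    rcases eq_or_ne t i with rfl | hti'
    · exact htC hi
    · simp [hti'] at hti
  · exfalso
    have hbz : D.w z ≤ b z := by simpa [hzx.symm] using hz
    rcases eq_or_ne y x with rfl | hyx
    · have := h.apply_lt_w (hN (Or.inl hyz))
      omega
    · exact h.notMem_edgeExponents ⟨y, z, hyz, by simpa [hyx.symm] using hy, hbz⟩

theorem isStrongVertexCover (h : D.IsColonExponent C b) : D.IsStrongVertexCover C :=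
  ⟨h.isVertexCover, Or.inr fun _ hx => h.exists_mem_L2_union_L3 hx⟩

end IsColonExponent

open scoped Classical in
variable (D C) in
noncomputable def coverExponent : Fin s →₀ ℕ :=
  Finsupp.equivFunOnFinite.symm fun i =>
    if i ∈ C then (if i ∈ D.L1 C then 0 else D.w i - 1) else D.w i

open scoped Classical in
theorem coverExponent_apply (i : Fin s) : D.coverExponent C i =
    if i ∈ C then (if i ∈ D.L1 C then 0 else D.w i - 1) else D.w i := by
  simp [coverExponent]

theorem exists_mem_of_add_coverExponent_mem (hC : D.IsVertexCover C) {v : Fin s →₀ ℕ}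
    (hv : v + D.coverExponent C ∈ D.edgeExponents) : ∃ i ∈ C, v i ≠ 0 := by
  by_contra! hv0
  obtain ⟨x, y, hxy, hx, hy⟩ := hv
  rw [Finsupp.add_apply, coverExponent_apply] at hx hy
  by_cases hyC : y ∈ C
  · rw [hv0 y hyC, if_pos hyC] at hy
    have := D.w_pos y
    split_ifs at hy <;> omega
  · have hxC : x ∈ C := (hC _ hxy).resolve_right hyC
    rw [hv0 x hxC, if_pos hxC, if_pos ⟨hxC, y, hxy, hyC⟩] at hx
    omega

theorem IsStrongVertexCover.add_coverExponent_mem (hC : D.IsStrongVertexCover C)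
    {v : Fin s →₀ ℕ} {i : Fin s} (hi : i ∈ C) (hvi : v i ≠ 0) :
    v + D.coverExponent C ∈ D.edgeExponents := by
  by_cases hi1 : i ∈ D.L1 C
  · obtain ⟨-, z, hiz, hzC⟩ := hi1
    refine ⟨i, z, hiz, ?_, ?_⟩
    · rw [Finsupp.add_apply]
      omega
    · rw [Finsupp.add_apply, coverExponent_apply, if_neg hzC]
      omega
  obtain ⟨y, hyi, hy⟩ : ∃ y, (y, i) ∈ D.E ∧ 1 ≤ D.coverExponent C y := by
    by_cases hi3 : i ∈ D.L3 C
    · obtain ⟨y, hyi, hy23, hwy⟩ := hC.exists_mem_L2_union_L3 hi3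
      obtain ⟨hyC, hy1⟩ := mem_L2_union_L3_iff.mp hy23
      exact ⟨y, hyi, by rw [coverExponent_apply, if_pos hyC, if_neg hy1]; omega⟩
    · obtain ⟨z, hz, hzC⟩ := Set.not_subset.mp fun hN => hi3 ⟨hi, hN⟩
      rcases hz with hiz | hzi
      · exact absurd ⟨hi, z, hiz, hzC⟩ hi1
      · exact ⟨z, hzi, by rw [coverExponent_apply, if_neg hzC]; exact D.w_pos z⟩
  refine ⟨y, i, hyi, ?_, ?_⟩
  · rw [Finsupp.add_apply]
    omega
  · rw [Finsupp.add_apply, coverExponent_apply, if_pos hi, if_neg hi1]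
    omega

theorem IsStrongVertexCover.isColonExponent (hC : D.IsStrongVertexCover C) :
    D.IsColonExponent C (D.coverExponent C) := fun _ =>
  ⟨exists_mem_of_add_coverExponent_mem hC.1, fun ⟨_, hi, hvi⟩ => hC.add_coverExponent_mem hi hvi⟩

end WOGraph

/-- **Corollary.** For a weighted oriented graph `D`, a prime ideal `p` of
`S = K[t_1,…,t_s]` is an associated prime of `I(D)` if and only if `p = (C)` for some
strong vertex cover `C` of `D`. -/
theorem assPrime_edgeIdeal_iff_strongVertexCover {s : ℕ} (K : Type*) [Field K]
    (D : WOGraph s) (p : Ideal (MvPolynomial (Fin s) K)) (hp : p.IsPrime) :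
    p ∈ assPrimes (D.edgeIdeal K) ↔
      ∃ C : Set (Fin s), D.IsStrongVertexCover C ∧
        p = Ideal.span ((fun x => (X x : MvPolynomial (Fin s) K)) '' C) := by
  rw [D.edgeIdeal_eq_restrictSupportIdeal K]
  constructor
  · rintro ⟨-, f, hpf⟩
    obtain ⟨b, hb⟩ := exists_eq_colon_monomial _ hp hpf
    have hC : D.IsColonExponent {i | X i ∈ p} b := fun v => by
      rw [← monomial_mem_restrictSupportIdeal_colon_monomial_iff (R := K)
        D.isUpperSet_edgeExponents, ← hb, monomial_one_mem_iff_of_isPrime hp]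
      rfl
    exact ⟨_, hC.isStrongVertexCover,
      hb.trans (restrictSupportIdeal_colon_monomial_eq_span_X _ hC)⟩
  · rintro ⟨C, hC, rfl⟩
    exact ⟨hp, monomial (D.coverExponent C) 1,
      (restrictSupportIdeal_colon_monomial_eq_span_X _ hC.isColonExponent).symm⟩
end

section
/- Let D be a weighted oriented graph with vertex set V(D) = {t_1,…,t_s} and edge ideal I(D) in S = K[t_1,…,t_s]. Then the irrelevant maximal ideal m = (t_1,…,t_s) is an associated prime of I(D) if and only if N_D^+(V⁺(D)) = V(D), where N_D^+(V⁺(D)) := {y ∈ V(D) : there exists x ∈ V⁺(D) with (x, y) ∈ E(D)}. -/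
open MvPolynomial Pointwise

/-- The irrelevant maximal ideal `m = (t_1, …, t_s)` of `S = K[t_1, …, t_s]`. -/
noncomputable def irrelevantIdeal (s : ℕ) (K : Type*) [Field K] : Ideal (MvPolynomial (Fin s) K) :=
  Ideal.span (Set.range (X : Fin s → MvPolynomial (Fin s) K))

/-! The maximal ideal `m` is associated to a monomial ideal `I` exactly when some monomial `t^b`
lies outside `I` while every `t_k t^b` lies in it: then `m ≤ (I : t^b) ≠ ⊤`, and maximality of `m`
gives equality. For `I(D)` such a `b` satisfies `b_z < w_z` for every `z`, so the generator
dividing `t_y t^b` must be `t_x t_y^{w_y}` with `1 ≤ b_x < w_x`. Conversely `b = w - 1` works as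
soon as every vertex has an in-neighbour of weight `> 1`. -/

namespace MvPolynomial

variable {σ : Type*}

theorem idealOfVars_eq_ker_constantCoeff (R : Type*) [CommSemiring R] :
    idealOfVars σ R = RingHom.ker constantCoeff := by
  ext f
  rw [idealOfVars, ← Set.image_univ, mem_ideal_span_X_image, RingHom.mem_ker, constantCoeff_eq]
  constructor
  · intro h
    by_contra h0
    obtain ⟨i, -, hi⟩ := h 0 (mem_support_iff.mpr h0)
    exact hi rfl
  · intro h m hm
    obtain ⟨i, hi⟩ := Finsupp.ne_iff.mp (ne_of_mem_of_not_mem hm (by simpa using h))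
    exact ⟨i, trivial, hi⟩

variable (σ) in
theorem idealOfVars_isMaximal (K : Type*) [Field K] : (idealOfVars σ K).IsMaximal := by
  rw [idealOfVars_eq_ker_constantCoeff]
  exact RingHom.ker_isMaximal_of_surjective _ fun r => ⟨C r, constantCoeff_C σ r⟩

end MvPolynomial

/-- `b` is the exponent of a monomial in the socle of `K[σ] / (t^a : a ∈ T)`: the monomial `t^b`
lies outside the monomial ideal, but each `t_k t^b` lies in it. -/
def IsSocleExponent {σ : Type*} (T : Set (σ →₀ ℕ)) (b : σ →₀ ℕ) : Prop :=
  (∀ a ∈ T, ¬ a ≤ b) ∧ ∀ k, ∃ a ∈ T, a ≤ b + Finsupp.single k 1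

theorem idealOfVars_mem_assPrimes_span_monomial_iff {σ K : Type*} [Field K]
    {T : Set (σ →₀ ℕ)} :
    idealOfVars σ K ∈ assPrimes (Ideal.span ((monomial · (1 : K)) '' T)) ↔
      ∃ b, IsSocleExponent T b := by
  constructor
  · rintro ⟨-, f, hf⟩
    have hfI : f ∉ Ideal.span ((monomial · (1 : K)) '' T) := by
      intro h
      refine (idealOfVars_isMaximal σ K).ne_top ((Ideal.eq_top_iff_one _).mpr ?_)
      rw [hf, Ideal.mem_colon_span_singleton, one_mul]
      exact h
    rw [mem_ideal_span_monomial_image] at hfI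
    push Not at hfI
    obtain ⟨b, hbf, hb⟩ := hfI
    refine ⟨b, hb, fun k => ?_⟩
    have hXf : X k * f ∈ Ideal.span ((monomial · (1 : K)) '' T) := by
      rw [← Ideal.mem_colon_span_singleton, ← hf]
      exact Ideal.subset_span ⟨k, rfl⟩
    rw [mem_ideal_span_monomial_image] at hXf
    refine hXf _ ?_
    rw [mem_support_iff, add_comm, coeff_X_mul]
    exact mem_support_iff.mp hbf
  · rintro ⟨b, hb, hk⟩
    refine ⟨(idealOfVars_isMaximal σ K).isPrime, monomial b 1, ?_⟩
    refine (idealOfVars_isMaximal σ K).eq_of_le ?_ ?_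
    · rw [Ne, Ideal.eq_top_iff_one, Ideal.mem_colon_span_singleton, one_mul,
        mem_ideal_span_monomial_image]
      intro h
      obtain ⟨a, ha, hab⟩ := h b (by classical simp [support_monomial])
      exact hb a ha hab
    · rw [idealOfVars, Ideal.span_le]
      rintro _ ⟨k, rfl⟩
      rw [SetLike.mem_coe, Ideal.mem_colon_span_singleton, X, monomial_mul, one_mul,
        mem_ideal_span_monomial_image]
      intro c hc
      obtain rfl := Finset.mem_singleton.mp (support_monomial_subset hc)
      simpa [add_comm] using hk k

namespace WOGraph

variable {s : ℕ} (D : WOGraph s)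

noncomputable def edgeExponent (e : Fin s × Fin s) : Fin s →₀ ℕ :=
  Finsupp.single e.1 1 + Finsupp.single e.2 (D.w e.2)

theorem edgeIdeal_eq_span_monomial (K : Type*) [Field K] :
    D.edgeIdeal K = Ideal.span ((monomial · (1 : K)) '' (D.edgeExponent '' D.E)) := by
  have hgen : ∀ e, X e.1 * X e.2 ^ D.w e.2 = monomial (D.edgeExponent e) (1 : K) := by
    intro e
    rw [X_pow_eq_monomial, X, monomial_mul, one_mul, edgeExponent]
  rw [edgeIdeal, Set.image_image]
  congr 1
  ext f
  simp [hgen, eq_comm]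

variable {D}

theorem fst_ne_snd_of_mem {e : Fin s × Fin s} (he : e ∈ D.E) : e.1 ≠ e.2 := by
  obtain ⟨i, j⟩ := e
  rintro (rfl : i = j)
  exact D.no_loops _ he

theorem edgeExponent_le_iff {e : Fin s × Fin s} (he : e ∈ D.E) {c : Fin s →₀ ℕ} :
    D.edgeExponent e ≤ c ↔ 1 ≤ c e.1 ∧ D.w e.2 ≤ c e.2 := by
  have hne := fst_ne_snd_of_mem he
  constructor
  · intro h
    have h1 := h e.1
    have h2 := h e.2
    simp only [edgeExponent, Finsupp.add_apply, Finsupp.single_apply, hne, hne.symm,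
      if_true, if_false, add_zero, zero_add] at h1 h2
    exact ⟨h1, h2⟩
  · rintro ⟨h1, h2⟩ t
    simp only [edgeExponent, Finsupp.add_apply, Finsupp.single_apply]
    split_ifs <;> subst_vars <;> omega

theorem isSocleExponent_weight_sub_one (h : ∀ y, ∃ x, 1 < D.w x ∧ (x, y) ∈ D.E) :
    IsSocleExponent (D.edgeExponent '' D.E) (Finsupp.equivFunOnFinite.symm (D.w - 1)) := by
  simp only [IsSocleExponent, Set.forall_mem_image, Set.exists_mem_image]
  refine ⟨fun e he hle => ?_, fun k => ?_⟩
  · have hw := ((edgeExponent_le_iff he).mp hle).2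
    have := D.w_pos e.2
    simp only [Finsupp.coe_equivFunOnFinite_symm, Pi.sub_apply, Pi.one_apply] at hw
    omega
  · obtain ⟨x, hx, hxk⟩ := h k
    refine ⟨(x, k), hxk, (edgeExponent_le_iff hxk).mpr ⟨?_, ?_⟩⟩ <;>
      simp only [Finsupp.add_apply, Finsupp.single_apply, Finsupp.coe_equivFunOnFinite_symm,
        Pi.sub_apply, Pi.one_apply] <;> split_ifs <;> omega

theorem lt_weight_of_isSocleExponent {b : Fin s →₀ ℕ}
    (hb : IsSocleExponent (D.edgeExponent '' D.E) b) (z : Fin s) : b z < D.w z := by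
  by_contra! hz
  obtain ⟨⟨x, y⟩, he, hle⟩ : ∃ e ∈ D.E, D.edgeExponent e ≤ b + Finsupp.single z 1 := by
    simpa using hb.2 z
  rw [edgeExponent_le_iff he] at hle
  refine hb.1 _ ⟨_, he, rfl⟩ ((edgeExponent_le_iff he).mpr ?_)
  have := D.w_pos z
  simp only [Finsupp.add_apply, Finsupp.single_apply] at hle ⊢
  constructor <;> split_ifs at hle <;> subst_vars <;> omega

theorem exists_edge_from_heavy_of_isSocleExponent {b : Fin s →₀ ℕ}
    (hb : IsSocleExponent (D.edgeExponent '' D.E) b) (y : Fin s) :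
    ∃ x, 1 < D.w x ∧ (x, y) ∈ D.E := by
  obtain ⟨⟨x, z⟩, he, hle⟩ : ∃ e ∈ D.E, D.edgeExponent e ≤ b + Finsupp.single y 1 := by
    simpa using hb.2 y
  have hxz : x ≠ z := fst_ne_snd_of_mem he
  rw [edgeExponent_le_iff he] at hle
  obtain rfl : z = y := by
    by_contra hzy
    have := lt_weight_of_isSocleExponent hb z
    simp only [Finsupp.add_apply, Finsupp.single_apply, if_neg (Ne.symm hzy)] at hle
    omega
  simp only [Finsupp.add_apply, Finsupp.single_apply, if_neg (Ne.symm hxz)] at hle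
  exact ⟨x, hle.1.trans_lt (lt_weight_of_isSocleExponent hb x), he⟩

theorem exists_isSocleExponent_iff :
    (∃ b, IsSocleExponent (D.edgeExponent '' D.E) b) ↔ ∀ y, ∃ x, 1 < D.w x ∧ (x, y) ∈ D.E :=
  ⟨fun ⟨_, hb⟩ => exists_edge_from_heavy_of_isSocleExponent hb,
    fun h => ⟨_, isSocleExponent_weight_sub_one h⟩⟩

end WOGraph

/-- **Proposition.** For a weighted oriented graph `D`, the irrelevant maximal ideal
`m = (t_1,…,t_s)` is an associated prime of `I(D)` if and only if
`N_D⁺(V⁺(D)) = V(D)`, i.e., every vertex receives an edge from a vertex of weight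
greater than one. -/
theorem irrelevant_mem_assPrimes_edgeIdeal_iff {s : ℕ} (K : Type*) [Field K]
    (D : WOGraph s) :
    irrelevantIdeal s K ∈ assPrimes (D.edgeIdeal K) ↔
      { y : Fin s | ∃ x : Fin s, 1 < D.w x ∧ (x, y) ∈ D.E } = Set.univ := by
  rw [show irrelevantIdeal s K = idealOfVars (Fin s) K from rfl, D.edgeIdeal_eq_span_monomial,
    idealOfVars_mem_assPrimes_span_monomial_iff, WOGraph.exists_isSocleExponent_iff,
    Set.eq_univ_iff_forall]
  rfl
end
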